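/- arXiv:0706.3381 — 8 statements merged into one kernel-verified Lean document; each statement's English description precedes it below -/
import Mathlib

section
/- Let A ⊆ B and B ⊆ C be integral ring extensions with d_A(B) and d_B(C) finite, where d denotes the supremum of integral degrees of elements. Then A ⊆ C is integral and d_A(C) ≤ d_A(B)^{d_B(C)} · d_B(C). -/
/-!
Let `c` be a root of a monic `q ∈ B[X]` of degree at most `d_B(C)`, and let each coefficient `bᵢ`
of `q` be a root of a monic polynomial over `A` of degree at most `d_A(B)`. Reducing powers with
these relations, the `A`-subalgebra of `C` generated by the `bᵢ` and `c` is spanned over `A` by the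
monomials `(∏ bᵢ ^ eᵢ) * c ^ j` with `eᵢ < d_A(B)` and `j < d_B(C)`, of which there are at most
`d_A(B) ^ d_B(C) * d_B(C)`. Cayley–Hamilton for multiplication by `c` on this finitely generated
`A`-module gives a monic polynomial over `A` of that degree killing `c`.
-/

open Polynomial Submodule Pointwise

section

variable {A C : Type*} [CommRing A] [CommRing C] [Algebra A C]

theorem Subalgebra.exists_monic_natDegree_le_aeval_eq_zero {S : Subalgebra A C} {F : Finset C}
    (hF : span A (F : Set C) = Subalgebra.toSubmodule S) {x : C} (hx : x ∈ S) :
    ∃ p : A[X], p.Monic ∧ p.natDegree ≤ F.card ∧ aeval x p = 0 := by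
  have hrange : (⊤ : Submodule A S).map S.val.toLinearMap = span A (F : Set C) := by
    rw [hF, Submodule.map_top]; ext; simp
  have : Module.Finite A S :=
    ⟨fg_of_fg_map_injective S.val.toLinearMap Subtype.val_injective (hrange ▸ ⟨F, rfl⟩)⟩
  obtain ⟨p, hpm, hpd, hp0⟩ :=
    LinearMap.exists_monic_and_natDegree_eq_and_aeval_eq_zero A (Algebra.lmul A S ⟨x, hx⟩)
  refine ⟨p, hpm, ?_, ?_⟩
  · rw [hpd, ← spanFinrank_map_eq_of_injective S.val.toLinearMap Subtype.val_injective, hrange,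
      ← Set.ncard_coe_finset]
    exact spanFinrank_span_le_ncard_of_finite F.finite_toSet
  · have := congr($hp0 1)
    rw [aeval_algHom_apply] at this
    simpa [← aeval_subalgebra_coe] using congrArg Subtype.val this

theorem Algebra.toSubmodule_adjoin_le_of_mul_mem {s : Set C} {N : Submodule A C}
    (h1 : (1 : C) ∈ N) (hs : ∀ x ∈ s, ∀ y ∈ N, x * y ∈ N) :
    Subalgebra.toSubmodule (adjoin A s) ≤ N := by
  intro z hz
  suffices ∀ y ∈ N, z * y ∈ N by simpa using this 1 h1
  induction hz using adjoin_induction with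
  | mem x hx => exact hs x hx
  | algebraMap r => exact fun y hy => by simpa [Algebra.smul_def] using N.smul_mem r hy
  | add a b _ _ ha hb => exact fun y hy => by rw [add_mul]; exact add_mem (ha y hy) (hb y hy)
  | mul a b _ _ ha hb => exact fun y hy => by rw [mul_assoc]; exact ha _ (hb y hy)

theorem Algebra.pow_natDegree_mem_toSubmodule_mul_span_pow {s : Set C} {x : C} {q : C[X]}
    (hq : q.Monic) (hqs : ∀ i < q.natDegree, q.coeff i ∈ adjoin A s) (hx : q.eval x = 0) :
    x ^ q.natDegree ∈
      Subalgebra.toSubmodule (adjoin A s) * span A ((x ^ ·) '' Set.Iio q.natDegree) := by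
  have h := congrArg (eval x) hq.as_sum
  rw [hx, eval_add, eval_pow, eval_X, eval_finsetSum] at h
  rw [eq_neg_of_add_eq_zero_left h.symm]
  refine neg_mem (sum_mem fun i hi => ?_)
  rw [eval_mul, eval_C, eval_pow, eval_X]
  exact mul_mem_mul (hqs i (Finset.mem_range.1 hi)) (subset_span ⟨i, Finset.mem_range.1 hi, rfl⟩)

theorem Algebra.toSubmodule_adjoin_insert_eq_mul_span_pow {s : Set C} {x : C} {q : C[X]}
    (hq : q.Monic) (hqs : ∀ i < q.natDegree, q.coeff i ∈ adjoin A s) (hx : q.eval x = 0) :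
    Subalgebra.toSubmodule (adjoin A (insert x s)) =
      Subalgebra.toSubmodule (adjoin A s) * span A ((x ^ ·) '' Set.Iio q.natDegree) := by
  nontriviality C
  set M := Subalgebra.toSubmodule (adjoin A s)
  set P := span A ((x ^ ·) '' Set.Iio q.natDegree)
  have hMM : ∀ m ∈ M, ∀ z ∈ M * P, m * z ∈ M * P := fun m hm z hz => by
    have hM : M * M = M := (adjoin A s).isIdempotentElem_toSubmodule.eq
    simpa only [← mul_assoc, hM] using mul_mem_mul hm hz
  have hPMP : P ≤ M * P := fun p hp => by
    simpa using mul_mem_mul (show (1 : C) ∈ M from one_mem (adjoin A s)) hp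
  have hxn : x ^ q.natDegree ∈ M * P := pow_natDegree_mem_toSubmodule_mul_span_pow hq hqs hx
  have hxP : ∀ p ∈ P, x * p ∈ M * P := fun p hp => by
    induction hp using span_induction with
    | mem _ h =>
      obtain ⟨i, hi, rfl⟩ := h
      rw [← pow_succ']
      rcases (Nat.succ_le_of_lt hi).lt_or_eq with hlt | heq
      · exact hPMP (subset_span ⟨i + 1, hlt, rfl⟩)
      · rwa [← heq] at hxn
    | zero => simp
    | add a b _ _ ha hb => rw [mul_add]; exact add_mem ha hb
    | smul r a _ ha => rw [mul_smul_comm]; exact smul_mem _ r ha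
  have hxMP : ∀ z ∈ M * P, x * z ∈ M * P := fun z hz => by
    refine Submodule.mul_induction_on hz (fun m hm p hp => ?_) fun a b ha hb => ?_
    · rw [mul_left_comm]; exact hMM m hm _ (hxP p hp)
    · rw [mul_add]; exact add_mem ha hb
  have hdeg : 0 < q.natDegree := hq.natDegree_pos.2 fun h => by simp [h] at hx
  have h1 : (1 : C) ∈ M * P := hPMP (subset_span ⟨0, hdeg, pow_zero x⟩)
  refine le_antisymm (toSubmodule_adjoin_le_of_mul_mem h1 ?_)
    (mul_le.2 fun m hm p hp => Subalgebra.mul_mem _ (adjoin_mono (Set.subset_insert _ _) hm) ?_)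
  · rintro y (rfl | hy) z hz
    · exact hxMP z hz
    · exact hMM y (subset_adjoin hy) z hz
  · refine (span_le (p := Subalgebra.toSubmodule (adjoin A (insert x s)))).2 ?_ hp
    rintro _ ⟨i, -, rfl⟩
    exact pow_mem (subset_adjoin (Set.mem_insert x s)) i

theorem Algebra.exists_finset_card_le_span_eq_adjoin_insert {s : Set C} {F : Finset C}
    (hF : span A (F : Set C) = Subalgebra.toSubmodule (adjoin A s)) {x : C} {q : C[X]}
    (hq : q.Monic) (hqs : ∀ i < q.natDegree, q.coeff i ∈ adjoin A s) (hx : q.eval x = 0) :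
    ∃ G : Finset C, G.card ≤ F.card * q.natDegree ∧
      span A (G : Set C) = Subalgebra.toSubmodule (adjoin A (insert x s)) := by
  classical
  refine ⟨F * (Finset.range q.natDegree).image (x ^ ·), ?_, ?_⟩
  · exact Finset.card_mul_le.trans
      (Nat.mul_le_mul_left _ (Finset.card_image_le.trans (Finset.card_range _).le))
  · rw [toSubmodule_adjoin_insert_eq_mul_span_pow hq hqs hx, ← hF, span_mul_span, Finset.coe_mul,
      Finset.coe_image, Finset.coe_range]

theorem Algebra.exists_finset_card_le_span_eq_adjoin_image {ι : Type*} (I : Finset ι) (β : ι → C)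
    {n : ℕ} (hβ : ∀ i ∈ I, ∃ p : A[X], p.Monic ∧ p.natDegree ≤ n ∧ aeval (β i) p = 0) :
    ∃ F : Finset C, F.card ≤ n ^ I.card ∧
      span A (F : Set C) = Subalgebra.toSubmodule (adjoin A (β '' I)) := by
  classical
  induction I using Finset.induction_on with
  | empty => exact ⟨{1}, by simp, by simp [Algebra.toSubmodule_bot, one_eq_span]⟩
  | insert i I hi ih =>
    obtain ⟨F, hFcard, hF⟩ := ih fun j hj => hβ j (Finset.mem_insert_of_mem hj)
    obtain ⟨p, hpm, hpn, hp0⟩ := hβ i (Finset.mem_insert_self i I)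
    obtain ⟨G, hGcard, hG⟩ := exists_finset_card_le_span_eq_adjoin_insert hF
      (hpm.map (algebraMap A C)) (fun k _ => by rw [coeff_map]; exact algebraMap_mem _ _)
      (by rwa [eval_map_algebraMap])
    refine ⟨G, ?_, by rw [hG, Finset.coe_insert, Set.image_insert_eq]⟩
    rw [Finset.card_insert_of_notMem hi, pow_succ]
    exact hGcard.trans (Nat.mul_le_mul hFcard (natDegree_map_le.trans hpn))

end

theorem stmt4_general {A B C : Type*} [CommRing A] [CommRing B] [CommRing C]
    [Algebra A B] [Algebra B C] [Algebra A C] [IsScalarTower A B C]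
    (dAB dBC : ℕ)
    (hdAB : ∀ b : B, ∃ p : Polynomial A, p.Monic ∧ p.natDegree ≤ dAB ∧ Polynomial.aeval b p = 0)
    (hdBC : ∀ c : C, ∃ p : Polynomial B, p.Monic ∧ p.natDegree ≤ dBC ∧ Polynomial.aeval c p = 0) :
    Algebra.IsIntegral A C ∧
      ∀ c : C, ∃ p : Polynomial A, p.Monic ∧ p.natDegree ≤ dAB ^ dBC * dBC ∧
        Polynomial.aeval c p = 0 := by
  have hdeg : ∀ c : C, ∃ p : A[X], p.Monic ∧ p.natDegree ≤ dAB ^ dBC * dBC ∧ aeval c p = 0 := by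
    intro c
    obtain ⟨q, hqm, hqd, hq0⟩ := hdBC c
    obtain ⟨F, hFcard, hF⟩ := Algebra.exists_finset_card_le_span_eq_adjoin_image
      (Finset.range dBC) (fun i => algebraMap B C (q.coeff i)) fun i _ => by
        obtain ⟨p, hpm, hpd, hp0⟩ := hdAB (q.coeff i)
        exact ⟨p, hpm, hpd, by rw [aeval_algebraMap_apply, hp0, map_zero]⟩
    obtain ⟨G, hGcard, hG⟩ := Algebra.exists_finset_card_le_span_eq_adjoin_insert hF
      (hqm.map (algebraMap B C))
      (fun i hi => Algebra.subset_adjoin ⟨i, Finset.mem_range.2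
        (hi.trans_le (natDegree_map_le.trans hqd)), (coeff_map _ _).symm⟩)
      (by rwa [eval_map_algebraMap])
    obtain ⟨p, hpm, hpd, hp0⟩ := Subalgebra.exists_monic_natDegree_le_aeval_eq_zero hG
      (Algebra.subset_adjoin (Set.mem_insert c _))
    refine ⟨p, hpm, hpd.trans (hGcard.trans ?_), hp0⟩
    rw [Finset.card_range] at hFcard
    exact Nat.mul_le_mul hFcard (natDegree_map_le.trans hqd)
  exact ⟨⟨fun c => let ⟨p, hpm, _, hp0⟩ := hdeg c; ⟨p, hpm, hp0⟩⟩, hdeg⟩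

/-- For integral extensions `A ⊆ B ⊆ C` with integral degrees
`d_A(B) ≤ dAB` and `d_B(C) ≤ dBC`, the extension `A ⊆ C` is integral and
`d_A(C) ≤ dAB ^ dBC * dBC`. -/
theorem stmt4 {A B C : Type*} [CommRing A] [CommRing B] [CommRing C]
    [Algebra A B] [Algebra B C] [Algebra A C] [IsScalarTower A B C]
    (hinjAB : Function.Injective (algebraMap A B))
    (hinjBC : Function.Injective (algebraMap B C))
    (hAB : Algebra.IsIntegral A B) (hBC : Algebra.IsIntegral B C) (dAB dBC : ℕ)
    (hdAB : ∀ b : B, ∃ p : Polynomial A, p.Monic ∧ p.natDegree ≤ dAB ∧ Polynomial.aeval b p = 0)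
    (hdBC : ∀ c : C, ∃ p : Polynomial B, p.Monic ∧ p.natDegree ≤ dBC ∧ Polynomial.aeval c p = 0) :
    Algebra.IsIntegral A C ∧
      ∀ c : C, ∃ p : Polynomial A, p.Monic ∧ p.natDegree ≤ dAB ^ dBC * dBC ∧
        Polynomial.aeval c p = 0 :=
  stmt4_general dAB dBC hdAB hdBC
end

section
/- Let A ⊆ B be an integral extension of commutative rings and S a multiplicatively closed subset of A. Then S⁻¹A ⊆ S⁻¹B is an integral extension, and the integral degree of S⁻¹B over S⁻¹A is at most the integral degree of B over A: d_{S⁻¹A}(S⁻¹B) ≤ d_A(B). -/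
/-!
Every element of `S⁻¹B` has the form `x / s` with `x ∈ B`, `s ∈ S`. If `p` is a monic equation of
`x` over `A`, then rescaling its roots by `1 / s` (`Polynomial.scaleRoots`) gives a monic
polynomial over `S⁻¹A` of the same degree that vanishes at `x / s`.
-/

open Polynomial

theorem Polynomial.Monic.exists_monic_aeval_algebraMap_mul_eq_zero {A R T : Type*}
    [CommRing A] [CommRing R] [CommRing T] [Algebra A R] [Algebra A T] [Algebra R T]
    [IsScalarTower A R T] {p : A[X]} (hp : p.Monic) {y : T} (hy : aeval y p = 0) (r : R) :
    ∃ q : R[X], q.Monic ∧ q.natDegree ≤ p.natDegree ∧ aeval (algebraMap R T r * y) q = 0 := by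
  refine ⟨(p.map (algebraMap A R)).scaleRoots r, (monic_scaleRoots_iff r).2 (hp.map _), ?_, ?_⟩
  · exact (natDegree_scaleRoots _ r).trans_le natDegree_map_le
  · exact scaleRoots_aeval_eq_zero (by rwa [aeval_map_algebraMap])

theorem IsLocalization.exists_algebraMap_mk'_one_mul_algebraMap_eq {A B : Type*}
    [CommRing A] [CommRing B] [Algebra A B] (S : Submonoid A)
    (Aₛ Bₛ : Type*) [CommRing Aₛ] [CommRing Bₛ] [Algebra A Aₛ] [IsLocalization S Aₛ]
    [Algebra B Bₛ] [Algebra A Bₛ] [IsScalarTower A B Bₛ]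
    [IsLocalization (Algebra.algebraMapSubmonoid B S) Bₛ]
    [Algebra Aₛ Bₛ] [IsScalarTower A Aₛ Bₛ] (z : Bₛ) :
    ∃ (x : B) (s : S), algebraMap Aₛ Bₛ (mk' Aₛ 1 s) * algebraMap B Bₛ x = z := by
  obtain ⟨⟨x, ⟨_, s, hs, rfl⟩⟩, rfl⟩ :=
    mk'_surjective (Algebra.algebraMapSubmonoid B S) z
  refine ⟨x, ⟨s, hs⟩, ?_⟩
  rw [algebraMap_mk' (S := B) (Rₘ := Aₛ) (Sₘ := Bₛ), map_one, mul_comm, ← mk'_eq_mul_mk'_one]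

theorem stmt5_general {A B : Type*} [CommRing A] [CommRing B] [Algebra A B]
    (S : Submonoid A)
    (Aₛ Bₛ : Type*) [CommRing Aₛ] [CommRing Bₛ]
    [Algebra A Aₛ] [IsLocalization S Aₛ]
    [Algebra B Bₛ] [Algebra A Bₛ] [IsScalarTower A B Bₛ]
    [IsLocalization (Algebra.algebraMapSubmonoid B S) Bₛ]
    [Algebra Aₛ Bₛ] [IsScalarTower A Aₛ Bₛ]
    (d : ℕ)
    (hd : ∀ b : B, ∃ p : Polynomial A, p.Monic ∧ p.natDegree ≤ d ∧ Polynomial.aeval b p = 0) :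
    Algebra.IsIntegral Aₛ Bₛ ∧
      ∀ b : Bₛ, ∃ p : Polynomial Aₛ, p.Monic ∧ p.natDegree ≤ d ∧ Polynomial.aeval b p = 0 := by
  have bounded : ∀ z : Bₛ, ∃ q : Aₛ[X], q.Monic ∧ q.natDegree ≤ d ∧ aeval z q = 0 := by
    intro z
    obtain ⟨x, s, rfl⟩ :=
      IsLocalization.exists_algebraMap_mk'_one_mul_algebraMap_eq (B := B) S Aₛ Bₛ z
    obtain ⟨p, hp, hpd, hpx⟩ := hd x
    have hy : aeval (algebraMap B Bₛ x) p = 0 := by rw [aeval_algebraMap_apply, hpx, map_zero]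
    obtain ⟨q, hq, hqd, hqz⟩ := hp.exists_monic_aeval_algebraMap_mul_eq_zero hy
      (IsLocalization.mk' Aₛ (1 : A) s)
    exact ⟨q, hq, hqd.trans hpd, hqz⟩
  refine ⟨⟨fun z => ?_⟩, bounded⟩
  obtain ⟨q, hq, -, hqz⟩ := bounded z
  exact ⟨q, hq, hqz⟩

/-- If `A ⊆ B` is integral and `S ⊆ A` is multiplicatively closed, then
`S⁻¹A ⊆ S⁻¹B` is integral and `d_{S⁻¹A}(S⁻¹B) ≤ d_A(B)`. -/
theorem stmt5 {A B : Type*} [CommRing A] [CommRing B] [Algebra A B]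
    (hinj : Function.Injective (algebraMap A B)) (S : Submonoid A)
    (Aₛ Bₛ : Type*) [CommRing Aₛ] [CommRing Bₛ]
    [Algebra A Aₛ] [IsLocalization S Aₛ]
    [Algebra B Bₛ] [Algebra A Bₛ] [IsScalarTower A B Bₛ]
    [IsLocalization (Algebra.algebraMapSubmonoid B S) Bₛ]
    [Algebra Aₛ Bₛ] [IsScalarTower A Aₛ Bₛ]
    (hint : Algebra.IsIntegral A B) (d : ℕ)
    (hd : ∀ b : B, ∃ p : Polynomial A, p.Monic ∧ p.natDegree ≤ d ∧ Polynomial.aeval b p = 0) :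
    Algebra.IsIntegral Aₛ Bₛ ∧
      ∀ b : Bₛ, ∃ p : Polynomial Aₛ, p.Monic ∧ p.natDegree ≤ d ∧ Polynomial.aeval b p = 0 :=
  stmt5_general S Aₛ Bₛ d hd
end

section
/- Let A be a commutative ring and x, y ∈ A with x a non zero divisor. Then y/x (in the total quotient ring of A) is integral over A satisfying a monic equation of degree at most n if and only if yⁿ ∈ x·(x,y)^{n-1}, i.e. the colon ideal (x·(x,y)^{n-1} : yⁿ) equals A. -/
/-!
Write `t = y/x`. For a polynomial `p` of degree at most `n`, clearing denominators gives
`xⁿ p(t) = ∑ pᵢ xⁿ⁻ⁱ yⁱ`, so, `x` being a non zero divisor, a monic equation of degree `n`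
for `t` is the same thing as a relation `yⁿ = ∑_{i<n} cᵢ xⁿ⁻ⁱ yⁱ`; a monic equation of
lower degree `d` is padded to degree `n` by the factor `Xⁿ⁻ᵈ`. Since `(x,y)ⁿ⁻¹` is spanned by
the monomials `xⁿ⁻¹⁻ⁱ yⁱ`, such relations are exactly the memberships `yⁿ ∈ x·(x,y)ⁿ⁻¹`.
-/

open Polynomial Finset

section SpanPair

variable {A : Type*} [CommRing A]

theorem pow_sub_mul_pow_mem_span_pair_pow (x y : A) {m i : ℕ} (hi : i ≤ m) :
    x ^ (m - i) * y ^ i ∈ Ideal.span {x, y} ^ m := by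
  rw [← Nat.sub_add_cancel hi, pow_add, Nat.add_sub_cancel]
  exact Ideal.mul_mem_mul (Ideal.pow_mem_pow (Ideal.subset_span (by simp)) _)
    (Ideal.pow_mem_pow (Ideal.subset_span (by simp)) _)

theorem span_pair_pow (x y : A) (m : ℕ) :
    Ideal.span {x, y} ^ m =
      Ideal.span (Set.range fun i : Fin (m + 1) => x ^ (m - i) * y ^ (i : ℕ)) := by
  refine le_antisymm ?_ (Ideal.span_le.2 <| Set.range_subset_iff.2 fun i =>
    pow_sub_mul_pow_mem_span_pair_pow x y (Nat.lt_succ_iff.1 i.2))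
  induction m with
  | zero => simp
  | succ m ih =>
    rw [pow_succ']
    refine (Ideal.mul_mono_right ih).trans ?_
    rw [Ideal.span_mul_span']
    refine Ideal.span_le.2 ?_
    rintro _ ⟨a, ha, _, ⟨i, rfl⟩, rfl⟩
    rcases ha with rfl | rfl
    · refine Ideal.subset_span ⟨i.castSucc, ?_⟩
      simp only [Fin.val_castSucc]
      rw [← mul_assoc, ← pow_succ', Nat.sub_add_comm (Nat.lt_succ_iff.1 i.2)]
    · refine Ideal.subset_span ⟨i.succ, ?_⟩
      simp only [Fin.val_succ, Nat.add_sub_add_right]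
      ring

theorem mem_span_singleton_mul_span_pair_pow_iff {x y z : A} {m : ℕ} :
    z ∈ Ideal.span {x} * Ideal.span {x, y} ^ m ↔
      ∃ c : Fin (m + 1) → A, z = ∑ i, c i * (x ^ (m + 1 - i) * y ^ (i : ℕ)) := by
  have mul_sum_eq (c : Fin (m + 1) → A) : x * ∑ i, c i * (x ^ (m - i) * y ^ (i : ℕ)) =
      ∑ i, c i * (x ^ (m + 1 - i) * y ^ (i : ℕ)) := by
    rw [mul_sum]
    refine sum_congr rfl fun i _ => ?_
    rw [Nat.sub_add_comm (Nat.lt_succ_iff.1 i.2), pow_succ]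
    ring
  simp_rw [Ideal.mem_span_singleton_mul, span_pair_pow, Ideal.mem_span_range_iff_exists_fun]
  constructor
  · rintro ⟨_, ⟨c, rfl⟩, rfl⟩
    exact ⟨c, mul_sum_eq c⟩
  · rintro ⟨c, rfl⟩
    exact ⟨_, ⟨c, rfl⟩, mul_sum_eq c⟩

end SpanPair

theorem Polynomial.IsMonicOfDegree.eq_X_pow_sub_sum {A : Type*} [CommRing A] {p : A[X]} {n : ℕ}
    (hp : p.IsMonicOfDegree n) : p = X ^ n - ∑ i : Fin n, C (-p.coeff i) * X ^ (i : ℕ) := by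
  conv_lhs => rw [hp.monic.as_sum, hp.natDegree_eq]
  simp [Fin.sum_univ_eq_sum_range (fun i => C (p.coeff i) * X ^ i), sub_eq_add_neg]

section Fraction

variable {A B : Type*} [CommRing A] [CommRing B] [Algebra A B] {x y : A} {t : B}

theorem algebraMap_pow_mul_pow (ht : algebraMap A B x * t = algebraMap A B y) {n i : ℕ}
    (hi : i ≤ n) : algebraMap A B x ^ n * t ^ i = algebraMap A B (x ^ (n - i) * y ^ i) := by
  rw [← Nat.sub_add_cancel hi, pow_add, Nat.add_sub_cancel, mul_assoc, ← mul_pow, ht]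
  simp

theorem algebraMap_pow_mul_aeval_X_pow_sub_sum (ht : algebraMap A B x * t = algebraMap A B y)
    {n : ℕ} (c : Fin n → A) :
    algebraMap A B x ^ n * aeval t (X ^ n - ∑ i, C (c i) * X ^ (i : ℕ)) =
      algebraMap A B (y ^ n - ∑ i, c i * (x ^ (n - i) * y ^ (i : ℕ))) := by
  simp only [map_sub, map_sum, map_mul, aeval_X_pow, aeval_C, mul_sub, mul_sum]
  congr 1
  · simpa using algebraMap_pow_mul_pow ht le_rfl
  · refine sum_congr rfl fun i _ => ?_
    rw [mul_left_comm, algebraMap_pow_mul_pow ht i.2.le, map_mul]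

theorem exists_monic_aeval_eq_zero_iff (hinj : Function.Injective (algebraMap A B))
    (hx : IsUnit (algebraMap A B x)) (ht : algebraMap A B x * t = algebraMap A B y) (n : ℕ) :
    (∃ p : A[X], p.Monic ∧ p.natDegree ≤ n ∧ aeval t p = 0) ↔
      ∃ c : Fin n → A, y ^ n = ∑ i, c i * (x ^ (n - i) * y ^ (i : ℕ)) := by
  constructor
  · rintro ⟨p, hmonic, hdeg, hroot⟩
    nontriviality A
    have hq : (p * X ^ (n - p.natDegree)).IsMonicOfDegree n := by
      simpa [Nat.add_sub_cancel' hdeg] using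
        (IsMonicOfDegree.mk rfl hmonic).mul (isMonicOfDegree_X_pow A (n - p.natDegree))
    refine ⟨fun i => -(p * X ^ (n - p.natDegree)).coeff i, sub_eq_zero.1 <| hinj ?_⟩
    rw [← algebraMap_pow_mul_aeval_X_pow_sub_sum ht, ← hq.eq_X_pow_sub_sum, map_mul, hroot,
      zero_mul, mul_zero, map_zero]
  · rintro ⟨c, hc⟩
    refine ⟨X ^ n - ∑ i, C (c i) * X ^ (i : ℕ), monic_X_pow_sub (degree_sum_fin_lt c), ?_,
      (hx.pow n).mul_left_cancel ?_⟩
    · exact natDegree_le_iff_degree_le.2 <|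
        (degree_sub_le _ _).trans (max_le (degree_X_pow_le n) (degree_sum_fin_lt c).le)
    · rw [algebraMap_pow_mul_aeval_X_pow_sub_sum ht, ← hc, sub_self, map_zero, mul_zero]

end Fraction

/-- For `x, y ∈ A` with `x` a non zero divisor, the fraction `y/x` in the
total quotient ring of `A` is integral over `A` with a monic equation of degree at most `n`
iff `yⁿ ∈ x·(x,y)^{n-1}`, i.e. iff the colon ideal `(x·(x,y)^{n-1} : yⁿ)` equals `A`. -/
theorem stmt6 {A : Type*} [CommRing A] (x y : A) (hx : x ∈ nonZeroDivisors A)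
    (n : ℕ) (hn : 1 ≤ n) :
    ((∃ p : Polynomial A, p.Monic ∧ p.natDegree ≤ n ∧
        Polynomial.aeval (IsLocalization.mk' (FractionRing A) y ⟨x, hx⟩) p = 0) ↔
      y ^ n ∈ Ideal.span {x} * Ideal.span {x, y} ^ (n - 1)) ∧
    (y ^ n ∈ Ideal.span {x} * Ideal.span {x, y} ^ (n - 1) ↔
      (Ideal.span {x} * Ideal.span {x, y} ^ (n - 1)).colon (Ideal.span {y ^ n}) = ⊤) := by
  obtain ⟨m, rfl⟩ : ∃ m, n = m + 1 := ⟨n - 1, by omega⟩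
  rw [Nat.add_sub_cancel, Submodule.colon_eq_top_iff_subset, SetLike.coe_subset_coe,
    Ideal.span_singleton_le_iff_mem, mem_span_singleton_mul_span_pair_pow_iff]
  exact ⟨exists_monic_aeval_eq_zero_iff (IsFractionRing.injective A _)
    (IsLocalization.map_units _ ⟨x, hx⟩) (IsLocalization.mk'_spec' _ y ⟨x, hx⟩) _, Iff.rfl⟩
end

section
/- Let A be a commutative ring and x, y ∈ A with x a non zero divisor. Then y/x is integral over A of integral degree at most n if and only if (x) is a reduction of the ideal I = (x,y) with reduction number rn_{(x)}(I) ≤ n−1, i.e. Iⁿ = x·I^{n-1}. -/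
/-!
Write `I = (x, y)` and `z = y / x`. Since `Iᵐ⁺¹ = x Iᵐ + (yᵐ⁺¹)`, the equality `Iᵐ⁺¹ = x Iᵐ`
amounts to `yᵐ⁺¹ ∈ x Iᵐ`. A monic equation of `z` of degree `d ≤ m + 1` becomes, after
multiplying by `xᵈ` (`Polynomial.scaleRoots`), a monic equation of `y` whose `i`-th coefficient
is divisible by `xᵈ⁻ⁱ`, which exhibits `yᵐ⁺¹` as an element of `x Iᵐ`. Conversely, every
`b ∈ Iᵐ` is `xᵐ q(z)` with `deg q ≤ m`, so `yᵐ⁺¹ = x b` gives `zᵐ⁺¹ = q(z)` after cancelling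
`xᵐ⁺¹`.
-/

open Polynomial Finset

namespace Ideal

variable {A : Type*} [CommRing A] (x y : A)

theorem pow_succ_mul_pow_mem_span_mul_span_pair_pow (j k : ℕ) :
    x ^ (j + 1) * y ^ k ∈ span {x} * span {x, y} ^ (j + k) := by
  rw [pow_succ', mul_assoc, pow_add]
  exact mul_mem_mul (mem_span_singleton_self x)
    (mul_mem_mul (pow_mem_pow (subset_span (by simp)) j) (pow_mem_pow (subset_span (by simp)) k))

theorem span_pair_pow_succ_le (m : ℕ) :
    span {x, y} ^ (m + 1) ≤ span {x} * span {x, y} ^ m ⊔ span {y ^ (m + 1)} := by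
  induction m with
  | zero => simp [span_insert]
  | succ m ih =>
    rw [pow_succ]
    refine (mul_mono_left ih).trans ?_
    rw [sup_mul, mul_assoc, ← pow_succ]
    refine sup_le le_sup_left (span_singleton_mul_le_iff.mpr fun b hb ↦ ?_)
    obtain ⟨a, c, rfl⟩ := mem_span_pair.mp hb
    have hx := pow_succ_mul_pow_mem_span_mul_span_pair_pow x y 0 (m + 1)
    rw [pow_one, zero_add] at hx
    rw [show y ^ (m + 1) * (a * x + c * y) = a * (x * y ^ (m + 1)) + c * y ^ (m + 1 + 1) by ring]
    refine add_mem (mem_sup_left (mul_mem_left _ a hx)) (mem_sup_right ?_)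
    exact mul_mem_left _ c (mem_span_singleton_self _)

theorem span_pair_pow_succ_eq_iff (m : ℕ) :
    span {x, y} ^ (m + 1) = span {x} * span {x, y} ^ m ↔
      y ^ (m + 1) ∈ span {x} * span {x, y} ^ m := by
  refine ⟨fun h ↦ h ▸ pow_mem_pow (subset_span (by simp)) _, fun h ↦ le_antisymm ?_ ?_⟩
  · exact (span_pair_pow_succ_le x y m).trans (sup_le le_rfl (span_le.mpr (by simpa using h)))
  · rw [pow_succ']
    exact mul_mono_left (span_mono (by simp))

theorem pow_succ_mem_span_mul_span_pair_pow_of_monic {q : A[X]} (hq : q.Monic) {m : ℕ}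
    (hdeg : q.natDegree ≤ m + 1) (hdvd : ∀ i < q.natDegree, x ^ (q.natDegree - i) ∣ q.coeff i)
    (hy : q.eval y = 0) : y ^ (m + 1) ∈ span {x} * span {x, y} ^ m := by
  set d := q.natDegree
  have hyd : y ^ d = -∑ i ∈ range d, q.coeff i * y ^ i := by
    have h := congrArg (eval y) hq.as_sum
    simp only [eval_add, eval_pow, eval_X, eval_finsetSum, eval_mul, eval_C, hy] at h
    linear_combination -h
  rw [show y ^ (m + 1) = y ^ (m + 1 - d) * y ^ d by rw [← pow_add]; congr 1; omega, hyd,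
    mul_neg, mul_sum]
  refine neg_mem (Ideal.sum_mem _ fun i hi ↦ ?_)
  have hi : i < d := mem_range.mp hi
  have key := pow_succ_mul_pow_mem_span_mul_span_pair_pow x y (d - i - 1) (m + 1 - d + i)
  rw [show d - i - 1 + 1 = d - i by omega, show d - i - 1 + (m + 1 - d + i) = m by omega] at key
  refine mem_of_dvd _ ?_ key
  obtain ⟨c, hc⟩ := hdvd i hi
  exact ⟨c, by rw [hc, show m + 1 - d + i = (m + 1 - d) + i by omega, pow_add]; ring⟩

end Ideal

section FractionAlgebra

variable {A B : Type*} [CommRing A] [CommRing B] [Algebra A B] {x y : A} {z : B}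

theorem exists_natDegree_le_algebraMap_eq_of_mem_span_pair_pow
    (hz : algebraMap A B x * z = algebraMap A B y) {m : ℕ} {b : A}
    (hb : b ∈ Ideal.span {x, y} ^ m) :
    ∃ q : A[X], q.natDegree ≤ m ∧ algebraMap A B b = algebraMap A B x ^ m * aeval z q := by
  induction m generalizing b with
  | zero => exact ⟨C b, by simp, by simp⟩
  | succ m ih =>
    rw [pow_succ] at hb
    refine Submodule.mul_induction_on hb (fun s hs t ht ↦ ?_) ?_
    · obtain ⟨q, hqdeg, hq⟩ := ih hs
      obtain ⟨a, c, rfl⟩ := Ideal.mem_span_pair.mp ht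
      refine ⟨q * (C c * X + C a), natDegree_mul_le.trans (by grw [hqdeg, natDegree_linear_le]), ?_⟩
      rw [map_mul, hq, map_add, map_mul, map_mul, ← hz]
      simp only [map_mul, map_add, aeval_C, aeval_X]
      ring
    · rintro u v ⟨qu, hu, equ⟩ ⟨qv, hv, eqv⟩
      refine ⟨qu + qv, natDegree_add_le_of_degree_le hu hv, ?_⟩
      rw [map_add, equ, eqv, map_add, mul_add]

theorem pow_succ_mem_span_mul_span_pair_pow_of_aeval_eq_zero
    (hinj : Function.Injective (algebraMap A B)) (hz : algebraMap A B x * z = algebraMap A B y)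
    {p : A[X]} (hp : p.Monic) {m : ℕ} (hdeg : p.natDegree ≤ m + 1) (hpz : aeval z p = 0) :
    y ^ (m + 1) ∈ Ideal.span {x} * Ideal.span {x, y} ^ m := by
  refine Ideal.pow_succ_mem_span_mul_span_pair_pow_of_monic x y ((monic_scaleRoots_iff x).mpr hp)
    (by rwa [natDegree_scaleRoots]) (fun i _ ↦ ?_) (hinj ?_)
  · rw [coeff_scaleRoots, natDegree_scaleRoots]
    exact dvd_mul_left _ _
  · rw [map_zero, ← coe_aeval_eq_eval, ← aeval_algebraMap_apply, ← hz]
    exact scaleRoots_aeval_eq_zero hpz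

theorem exists_monic_aeval_eq_zero_of_pow_succ_mem_span_mul_span_pair_pow
    (hx : IsLeftRegular (algebraMap A B x)) (hz : algebraMap A B x * z = algebraMap A B y) {m : ℕ}
    (h : y ^ (m + 1) ∈ Ideal.span {x} * Ideal.span {x, y} ^ m) :
    ∃ p : A[X], p.Monic ∧ p.natDegree ≤ m + 1 ∧ aeval z p = 0 := by
  obtain ⟨b, hb, hxb⟩ := Ideal.mem_span_singleton_mul.mp h
  obtain ⟨q, hqdeg, hq⟩ := exists_natDegree_le_algebraMap_eq_of_mem_span_pair_pow hz hb
  have hzq : z ^ (m + 1) = aeval z q := (hx.pow (m + 1)) <| by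
    calc algebraMap A B x ^ (m + 1) * z ^ (m + 1)
        = algebraMap A B (x * b) := by rw [← mul_pow, hz, hxb, map_pow]
      _ = algebraMap A B x ^ (m + 1) * aeval z q := by rw [map_mul, hq]; ring
  refine ⟨X ^ (m + 1) - q, monic_X_pow_sub ?_, ?_, by rw [map_sub, aeval_X_pow, hzq, sub_self]⟩
  · exact (degree_le_of_natDegree_le hqdeg).trans_lt (by exact_mod_cast m.lt_succ_self)
  · exact (natDegree_sub_le _ _).trans (max_le (natDegree_X_pow_le _) (hqdeg.trans m.le_succ))

theorem exists_monic_aeval_eq_zero_iff_pow_succ_mem_span_mul_span_pair_pow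
    (hinj : Function.Injective (algebraMap A B)) (hx : IsLeftRegular (algebraMap A B x))
    (hz : algebraMap A B x * z = algebraMap A B y) (m : ℕ) :
    (∃ p : A[X], p.Monic ∧ p.natDegree ≤ m + 1 ∧ aeval z p = 0) ↔
      y ^ (m + 1) ∈ Ideal.span {x} * Ideal.span {x, y} ^ m :=
  ⟨fun ⟨_, hp, hdeg, hpz⟩ ↦
    pow_succ_mem_span_mul_span_pair_pow_of_aeval_eq_zero hinj hz hp hdeg hpz,
    exists_monic_aeval_eq_zero_of_pow_succ_mem_span_mul_span_pair_pow hx hz⟩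

end FractionAlgebra

/-- For `x, y ∈ A` with `x` a non zero divisor, `y/x` is integral over `A`
of integral degree at most `n` iff `(x)` is a reduction of `I = (x,y)` with reduction
number at most `n-1`, i.e. `Iⁿ = x·I^{n-1}`. -/
theorem stmt7 {A : Type*} [CommRing A] (x y : A) (hx : x ∈ nonZeroDivisors A)
    (n : ℕ) (hn : 1 ≤ n) :
    (∃ p : Polynomial A, p.Monic ∧ p.natDegree ≤ n ∧
        Polynomial.aeval (IsLocalization.mk' (FractionRing A) y ⟨x, hx⟩) p = 0) ↔
      Ideal.span {x, y} ^ n = Ideal.span {x} * Ideal.span {x, y} ^ (n - 1) := by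
  obtain ⟨m, rfl⟩ : ∃ m, n = m + 1 := ⟨n - 1, by omega⟩
  rw [Nat.add_sub_cancel, Ideal.span_pair_pow_succ_eq_iff]
  exact exists_monic_aeval_eq_zero_iff_pow_succ_mem_span_mul_span_pair_pow
    (IsFractionRing.injective A _)
    (IsLocalization.map_units (FractionRing A) (⟨x, hx⟩ : nonZeroDivisors A)).isRegular.left
    (IsLocalization.mk'_spec' _ y ⟨x, hx⟩) m
end

section
/- Let A be a noetherian ring, I an ideal, and N ⊆ M finitely generated A-modules. Then there exists an integer s ≥ 0 such that for all n ≥ s, Iⁿ M ∩ N = I^{n-s}(I^s M ∩ N). -/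
/-! Mathlib's Artin–Rees lemma `Ideal.exists_pow_inf_eq_pow_smul` requires the module to live in
the universe of the ring. A finite module is isomorphic to a quotient of some `Fin n → A`, and
the statement is invariant under linear equivalences, so the lemma transfers to every universe. -/

namespace Ideal

variable {R M M' : Type*} [CommRing R] [AddCommGroup M] [Module R M]
  [AddCommGroup M'] [Module R M']

theorem map_pow_smul_top_inf (e : M ≃ₗ[R] M') (I : Ideal R) (N : Submodule R M) (n : ℕ) :
    (I ^ n • ⊤ ⊓ N).map (e : M →ₗ[R] M') = I ^ n • ⊤ ⊓ N.map (e : M →ₗ[R] M') := by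
  rw [Submodule.map_inf _ e.injective, Submodule.map_smul'', Submodule.map_top,
    LinearEquiv.range]

theorem pow_inf_eq_pow_smul_iff_of_linearEquiv (e : M ≃ₗ[R] M') (I : Ideal R)
    (N : Submodule R M) (n k : ℕ) :
    I ^ n • ⊤ ⊓ N.map (e : M →ₗ[R] M') = I ^ (n - k) • (I ^ k • ⊤ ⊓ N.map (e : M →ₗ[R] M')) ↔
      I ^ n • ⊤ ⊓ N = I ^ (n - k) • (I ^ k • ⊤ ⊓ N) := by
  rw [← map_pow_smul_top_inf, ← map_pow_smul_top_inf, ← Submodule.map_smul'',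
    (Submodule.map_injective_of_injective e.injective).eq_iff]

theorem exists_pow_inf_eq_pow_smul' [IsNoetherianRing R] [Module.Finite R M] (I : Ideal R)
    (N : Submodule R M) : ∃ k : ℕ, ∀ n ≥ k, I ^ n • ⊤ ⊓ N = I ^ (n - k) • (I ^ k • ⊤ ⊓ N) := by
  obtain ⟨m, f, hf⟩ := Module.Finite.exists_fin' R M
  let e : M ≃ₗ[R] (Fin m → R) ⧸ LinearMap.ker f := (f.quotKerEquivOfSurjective hf).symm
  obtain ⟨k, hk⟩ := exists_pow_inf_eq_pow_smul I (N.map e.toLinearMap)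
  exact ⟨k, fun n hn => (pow_inf_eq_pow_smul_iff_of_linearEquiv e I N n k).mp (hk n hn)⟩

end Ideal

/-- Artin–Rees: For a noetherian ring `A`, ideal `I`, and finitely generated
modules `N ⊆ M`, there is `s ≥ 0` with `IⁿM ∩ N = I^{n-s}(I^s M ∩ N)` for all `n ≥ s`. -/
theorem stmt8 {A : Type*} [CommRing A] [IsNoetherianRing A]
    {M : Type*} [AddCommGroup M] [Module A M] [Module.Finite A M]
    (I : Ideal A) (N : Submodule A M) :
    ∃ s : ℕ, ∀ n, s ≤ n →
      (I ^ n • ⊤ : Submodule A M) ⊓ N = I ^ (n - s) • ((I ^ s • ⊤ : Submodule A M) ⊓ N) :=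
  I.exists_pow_inf_eq_pow_smul' N
end

section
/- Let A be a noetherian ring, J ⊆ I two ideals of A contained in the Jacobson radical of A, and N ⊆ M finitely generated A-modules. If an integer s satisfies Iⁿ M ∩ N = I^{n-s}(I^s M ∩ N) + J·Iⁿ M ∩ N for all n ≥ s+1, then Iⁿ M ∩ N = I^{n-s}(I^s M ∩ N) for all n ≥ s+1. -/
/-!
Iterating the hypothesis, and using `J • I ^ m M ⊆ I ^ (m + 1) M`, puts `I ^ n M ∩ N` inside
`P ⊔ I ^ k M` for every `k`, where `P = I ^ (n - s) (I ^ s M ∩ N)`. Krull's intersection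
theorem for the finite module `M ⧸ P` then gives `⨅ k, (P ⊔ I ^ k M) = P`.
-/

namespace Submodule

variable {R M : Type*} [CommRing R] [AddCommGroup M] [Module R M]

theorem sup_smul_top_eq_comap_mkQ (P : Submodule R M) (I : Ideal R) :
    P ⊔ I • ⊤ = (I • ⊤ : Submodule R (M ⧸ P)).comap P.mkQ := by
  rw [← comap_map_mkQ, map_smul'', map_top, range_mkQ]

theorem iInf_sup_pow_smul_top_of_le_jacobson [IsNoetherianRing R] [Module.Finite R M]
    {I : Ideal R} (hI : I ≤ (⊥ : Ideal R).jacobson) (P : Submodule R M) :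
    ⨅ k : ℕ, (P ⊔ I ^ k • ⊤) = P := by
  simp_rw [sup_smul_top_eq_comap_mkQ, ← comap_iInf,
    Ideal.iInf_pow_smul_eq_bot_of_le_jacobson _ hI, comap_bot, ker_mkQ]

theorem pow_sub_smul_pow_smul_top_inf_le (I : Ideal R) (N : Submodule R M) {s n : ℕ}
    (hsn : s ≤ n) : I ^ (n - s) • (I ^ s • ⊤ ⊓ N) ≤ I ^ n • ⊤ ⊓ N := by
  refine le_inf ?_ (smul_le_right.trans inf_le_right)
  calc I ^ (n - s) • (I ^ s • ⊤ ⊓ N) ≤ I ^ (n - s) • (I ^ s • ⊤ : Submodule R M) :=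
        smul_mono_right _ inf_le_left
    _ = I ^ n • ⊤ := by rw [smul_smul, ← pow_add, Nat.sub_add_cancel hsn]

theorem smul_pow_smul_top_le_of_le {I J : Ideal R} (hJI : J ≤ I) (n : ℕ) :
    J • (I ^ n • ⊤ : Submodule R M) ≤ I ^ (n + 1) • ⊤ := by
  rw [pow_succ', ← smul_smul]
  exact smul_mono_left hJI

theorem pow_smul_top_inf_le_sup_of_eq_sup_smul_inf {I J : Ideal R} (hJI : J ≤ I)
    (N : Submodule R M) (s : ℕ)
    (h : ∀ n, s + 1 ≤ n →
      (I ^ n • ⊤ : Submodule R M) ⊓ N =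
        I ^ (n - s) • ((I ^ s • ⊤ : Submodule R M) ⊓ N) ⊔
          (J • (I ^ n • ⊤ : Submodule R M)) ⊓ N)
    {n : ℕ} (hn : s + 1 ≤ n) (k : ℕ) :
    (I ^ n • ⊤ : Submodule R M) ⊓ N ≤
      I ^ (n - s) • ((I ^ s • ⊤ : Submodule R M) ⊓ N) ⊔ I ^ (n + k) • ⊤ ⊓ N := by
  induction k with
  | zero => exact le_sup_right
  | succ k ih =>
    refine ih.trans (sup_le le_sup_left ?_)
    rw [h (n + k) (by omega)]
    refine sup_le ?_ ?_
    · exact le_sup_of_le_left (smul_mono_left (Ideal.pow_le_pow_right (by omega)))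
    · exact le_sup_of_le_right (inf_le_inf_right N (smul_pow_smul_top_le_of_le hJI _))

end Submodule

open Submodule in
/-- If `J ⊆ I` are ideals contained in the Jacobson radical of the noetherian
ring `A`, and `s` satisfies the Artin–Rees property modulo `J` for `N ⊆ M`, then `s`
satisfies the usual Artin–Rees property. -/
theorem stmt9 {A : Type*} [CommRing A] [IsNoetherianRing A]
    {M : Type*} [AddCommGroup M] [Module A M] [Module.Finite A M]
    (I J : Ideal A) (hJI : J ≤ I) (hI : I ≤ (⊥ : Ideal A).jacobson)
    (N : Submodule A M) (s : ℕ)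
    (h : ∀ n, s + 1 ≤ n →
      (I ^ n • ⊤ : Submodule A M) ⊓ N =
        I ^ (n - s) • ((I ^ s • ⊤ : Submodule A M) ⊓ N) ⊔
          (J • (I ^ n • ⊤ : Submodule A M)) ⊓ N) :
    ∀ n, s + 1 ≤ n →
      (I ^ n • ⊤ : Submodule A M) ⊓ N = I ^ (n - s) • ((I ^ s • ⊤ : Submodule A M) ⊓ N) := by
  intro n hn
  refine le_antisymm ?_ (pow_sub_smul_pow_smul_top_inf_le I N (by omega))
  rw [← iInf_sup_pow_smul_top_of_le_jacobson hI (I ^ (n - s) • (I ^ s • ⊤ ⊓ N))]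
  refine le_iInf fun k => (pow_smul_top_inf_le_sup_of_eq_sup_smul_inf hJI N s h hn k).trans ?_
  exact sup_le_sup_left (inf_le_left.trans (pow_smul_top_le I M (by omega))) _
end

section
/- Let A be a commutative ring, I = (x,y) a two-generated ideal with x an M-regular element for an A-module M. Then for every n ≥ 2, the module of effective n-relations of I with respect to M is E(I;M)_n ≅ (x I^{n-1} M : yⁿ) / (x I^{n-2} M : y^{n-1}), where the colons are taken in M. -/
/-!
For `m` in the colon module `(x N : y e)` write `y e m = x w` with `w ∈ N`; `w` is unique
because `x` is `M`-regular, and `(-w, e m)` is a relation `x z + y t = 0` with entries in `N`.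
This map from the colon module to the homology of `L → N ⊕ N → M` is onto as soon as
`N ≤ x L + e M` and `y L ≤ N`: the second entry of any relation can be corrected by a boundary
`(-y u, x u)` to a multiple of `e`. Its kernel is `(x L : e)`, again by regularity of `x`.
With `N = I^{n-1} M`, `L = I^{n-2} M` and `e = y^{n-1}` the first condition is
`I^{n-1} ≤ x I^{n-2} + (y^{n-1})`.
-/

open Pointwise

theorem Ideal.sup_pow_succ_le {A : Type*} [CommSemiring A] (J J' : Ideal A) (k : ℕ) :
    (J ⊔ J') ^ (k + 1) ≤ J * (J ⊔ J') ^ k ⊔ J' ^ (k + 1) := by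
  induction k with
  | zero => simp
  | succ k ih =>
    calc (J ⊔ J') ^ (k + 2) = J * (J ⊔ J') ^ (k + 1) ⊔ J' * (J ⊔ J') ^ (k + 1) := by
          rw [pow_succ' _ (k + 1), Ideal.sup_mul]
      _ ≤ J * (J ⊔ J') ^ (k + 1) ⊔ (J * (J' * (J ⊔ J') ^ k) ⊔ J' ^ (k + 2)) := by
          gcongr
          calc J' * (J ⊔ J') ^ (k + 1) ≤ J' * (J * (J ⊔ J') ^ k ⊔ J' ^ (k + 1)) := by gcongr
            _ = _ := by rw [Ideal.mul_sup, mul_left_comm, pow_succ' J' (k + 1)]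
      _ ≤ J * (J ⊔ J') ^ (k + 1) ⊔ J' ^ (k + 2) := by
          rw [← sup_assoc, ← Ideal.mul_sup]
          gcongr
          rw [pow_succ' _ k]
          exact sup_le le_rfl (Ideal.mul_mono_left le_sup_right)

section Koszul

variable {A : Type*} [CommRing A] {M : Type*} [AddCommGroup M] [Module A M]

def koszulCycles (x y : A) (N : Submodule A M) : Submodule A (M × M) :=
  N.prod N ⊓ LinearMap.ker (x • LinearMap.fst A M M + y • LinearMap.snd A M M)

def koszulBoundaries (x y : A) (L : Submodule A M) : Submodule A (M × M) :=
  L.map (LinearMap.prod ((-y) • LinearMap.id) (x • LinearMap.id))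

/-- `E(I;M)_n` is `koszulHomology x y (I ^ (n - 2) • ⊤) (I ^ (n - 1) • ⊤)`. -/
abbrev koszulHomology (x y : A) (L N : Submodule A M) :=
  koszulCycles x y N ⧸ (koszulBoundaries x y L).comap (koszulCycles x y N).subtype

theorem mem_koszulCycles {x y : A} {N : Submodule A M} {p : M × M} :
    p ∈ koszulCycles x y N ↔ p.1 ∈ N ∧ p.2 ∈ N ∧ x • p.1 + y • p.2 = 0 := by
  simp [koszulCycles, and_assoc]

theorem mem_koszulBoundaries {x y : A} {L : Submodule A M} {p : M × M} :
    p ∈ koszulBoundaries x y L ↔ ∃ u ∈ L, (-(y • u), x • u) = p := by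
  simp [koszulBoundaries, neg_smul]

variable {x e : A} {L N : Submodule A M}

noncomputable def IsSMulRegular.pointwiseSMulEquiv (hx : IsSMulRegular M x)
    (N : Submodule A M) : ↥(x • N) ≃ₗ[A] N :=
  (N.equivMapOfInjective (DistribSMul.toLinearMap A M x) hx).symm

theorem IsSMulRegular.smul_pointwiseSMulEquiv (hx : IsSMulRegular M x) (m : ↥(x • N)) :
    x • (hx.pointwiseSMulEquiv N m : M) = m :=
  Submodule.map_equivMapOfInjective_symm_apply (DistribSMul.toLinearMap A M x) hx N m

noncomputable def colonToKoszulCycles (hx : IsSMulRegular M x) (y : A)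
    (heN : e • (⊤ : Submodule A M) ≤ N) :
    (x • N).comap (LinearMap.lsmul A M (y * e)) →ₗ[A] koszulCycles x y N :=
  LinearMap.codRestrict _
    ((-(N.subtype ∘ₗ (hx.pointwiseSMulEquiv N).toLinearMap ∘ₗ
        (LinearMap.lsmul A M (y * e)).submoduleComap (x • N))).prod
      (LinearMap.lsmul A M e ∘ₗ Submodule.subtype _)) fun m => by
    refine mem_koszulCycles.2 ⟨neg_mem (Submodule.coe_mem _),
      heN (Submodule.smul_mem_pointwise_smul _ _ _ trivial), ?_⟩
    simp [hx.smul_pointwiseSMulEquiv, mul_smul]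

theorem smul_colonToKoszulCycles_fst (hx : IsSMulRegular M x) (y : A)
    (heN : e • (⊤ : Submodule A M) ≤ N) (m : (x • N).comap (LinearMap.lsmul A M (y * e))) :
    x • (colonToKoszulCycles hx y heN m : M × M).1 = -((y * e) • (m : M)) := by
  simp [colonToKoszulCycles, hx.smul_pointwiseSMulEquiv]

theorem colonToKoszulCycles_snd (hx : IsSMulRegular M x) (y : A)
    (heN : e • (⊤ : Submodule A M) ≤ N) (m : (x • N).comap (LinearMap.lsmul A M (y * e))) :
    (colonToKoszulCycles hx y heN m : M × M).2 = e • (m : M) :=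
  rfl

noncomputable def colonToKoszulHomology (hx : IsSMulRegular M x) (y : A) (L : Submodule A M)
    (heN : e • (⊤ : Submodule A M) ≤ N) :
    (x • N).comap (LinearMap.lsmul A M (y * e)) →ₗ[A] koszulHomology x y L N :=
  Submodule.mkQ _ ∘ₗ colonToKoszulCycles hx y heN

theorem ker_colonToKoszulHomology (hx : IsSMulRegular M x) (y : A)
    (heN : e • (⊤ : Submodule A M) ≤ N) :
    LinearMap.ker (colonToKoszulHomology hx y L heN) =
      ((x • L).comap (LinearMap.lsmul A M e)).comap (Submodule.subtype _) := by
  ext m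
  have hw := smul_colonToKoszulCycles_fst hx y heN m
  have hem := colonToKoszulCycles_snd hx y heN m
  set w := (colonToKoszulCycles hx y heN m : M × M).1
  simp only [colonToKoszulHomology, LinearMap.mem_ker, LinearMap.comp_apply, Submodule.mkQ_apply,
    Submodule.Quotient.mk_eq_zero, Submodule.mem_comap, Submodule.subtype_apply,
    mem_koszulBoundaries, LinearMap.lsmul_apply, Submodule.mem_smul_pointwise_iff_exists]
  constructor
  · rintro ⟨u, hu, huw⟩
    exact ⟨u, hu, by rw [← hem, ← huw]⟩
  · rintro ⟨u, hu, hxu⟩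
    refine ⟨u, hu, Prod.ext ?_ (by rw [hem, hxu])⟩
    have : x • (y • u) = x • -w := by rw [smul_comm, hxu, smul_neg, hw, neg_neg, mul_smul]
    rw [hx this, neg_neg]

theorem colonToKoszulHomology_surjective (hx : IsSMulRegular M x) (y : A)
    (heN : e • (⊤ : Submodule A M) ≤ N) (hyL : y • L ≤ N) (hNL : N ≤ x • L ⊔ e • ⊤) :
    Function.Surjective (colonToKoszulHomology hx y L heN) := by
  rintro ⟨⟨z, t⟩, hzt⟩
  obtain ⟨hz, ht, hcyc⟩ := mem_koszulCycles.1 hzt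
  obtain ⟨a, ha, b, hb, rfl⟩ := Submodule.mem_sup.1 (hNL ht)
  obtain ⟨u, hu, rfl⟩ := (Submodule.mem_smul_pointwise_iff_exists _ _ _).1 ha
  obtain ⟨m, -, rfl⟩ := (Submodule.mem_smul_pointwise_iff_exists _ _ _).1 hb
  have hyu : y • u ∈ N := hyL (Submodule.smul_mem_pointwise_smul _ _ _ hu)
  have hxw : x • (-z - y • u) = (y * e) • m := by
    linear_combination (norm := module) -hcyc
  have hm : m ∈ (x • N).comap (LinearMap.lsmul A M (y * e)) :=
    (Submodule.mem_smul_pointwise_iff_exists _ _ _).2 ⟨_, sub_mem (neg_mem hz) hyu, hxw⟩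
  refine ⟨⟨m, hm⟩, (Submodule.Quotient.eq _).2 ?_⟩
  have hw := smul_colonToKoszulCycles_fst hx y heN ⟨m, hm⟩
  have hw' : (colonToKoszulCycles hx y heN ⟨m, hm⟩ : M × M).1 = z + y • u :=
    hx (show x • _ = x • _ by linear_combination (norm := module) hw + hxw)
  refine mem_koszulBoundaries.2 ⟨-u, neg_mem hu, Prod.ext ?_ ?_⟩
  · simp [hw']
  · simp [colonToKoszulCycles_snd]

noncomputable def koszulHomologyEquivColon (hx : IsSMulRegular M x) (y : A)
    (heN : e • (⊤ : Submodule A M) ≤ N) (hyL : y • L ≤ N) (hNL : N ≤ x • L ⊔ e • ⊤) :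
    koszulHomology x y L N ≃ₗ[A]
      (x • N).comap (LinearMap.lsmul A M (y * e)) ⧸
        ((x • L).comap (LinearMap.lsmul A M e)).comap (Submodule.subtype _) :=
  ((Submodule.quotEquivOfEq _ _ (ker_colonToKoszulHomology hx y heN).symm).trans
    (LinearMap.quotKerEquivOfSurjective _
      (colonToKoszulHomology_surjective hx y heN hyL hNL))).symm

end Koszul

/-- For `I = (x,y)` with `x` an `M`-regular element, the module of effective
`n`-relations of `I` with respect to `M` — which, as in the context, is the first homology of
the truncated Koszul-type complex
`I^{n-2}M → I^{n-1}M ⊕ I^{n-1}M → IⁿM`, `u ↦ (−yu, xu)`, `(z,t) ↦ xz + yt` —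
is isomorphic to `(x I^{n-1} M : yⁿ) / (x I^{n-2} M : y^{n-1})` (colons taken in `M`). -/
theorem stmt12 {A : Type*} [CommRing A] (M : Type*) [AddCommGroup M] [Module A M]
    (x y : A) (hx : ∀ m : M, x • m = 0 → m = 0) (n : ℕ) (hn : 2 ≤ n) :
    letI I : Ideal A := Ideal.span {x, y}
    -- the Koszul-type complex in degree n
    letI D1 : M × M →ₗ[A] M := x • LinearMap.fst A M M + y • LinearMap.snd A M M
    letI D2 : M →ₗ[A] M × M := LinearMap.prod ((-y) • LinearMap.id) (x • LinearMap.id)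
    letI K : Submodule A (M × M) :=
      (I ^ (n - 1) • (⊤ : Submodule A M)).prod (I ^ (n - 1) • (⊤ : Submodule A M)) ⊓
        LinearMap.ker D1
    letI Im : Submodule A (M × M) := (I ^ (n - 2) • (⊤ : Submodule A M)).map D2
    -- the colon modules
    letI Q1 : Submodule A M :=
      Submodule.comap (LinearMap.lsmul A M (y ^ n))
        ((Ideal.span {x} * I ^ (n - 1)) • (⊤ : Submodule A M))
    letI Q2 : Submodule A M :=
      Submodule.comap (LinearMap.lsmul A M (y ^ (n - 1)))
        ((Ideal.span {x} * I ^ (n - 2)) • (⊤ : Submodule A M))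
    Nonempty ((↥K ⧸ Submodule.comap K.subtype Im) ≃ₗ[A]
      (↥Q1 ⧸ Submodule.comap Q1.subtype Q2)) := by
  obtain ⟨k, rfl⟩ : ∃ k, n = k + 2 := ⟨n - 2, by omega⟩
  set I := Ideal.span {x, y}
  have hyI : y ∈ I := Ideal.subset_span (by simp)
  show Nonempty (koszulHomology x y (I ^ k • (⊤ : Submodule A M)) (I ^ (k + 1) • ⊤) ≃ₗ[A]
    ((Ideal.span {x} * I ^ (k + 1)) • (⊤ : Submodule A M)).comap
        (LinearMap.lsmul A M (y ^ (k + 1 + 1))) ⧸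
      (((Ideal.span {x} * I ^ k) • (⊤ : Submodule A M)).comap
        (LinearMap.lsmul A M (y ^ (k + 1)))).comap (Submodule.subtype _))
  rw [pow_succ' y (k + 1), Submodule.mul_smul, Submodule.mul_smul,
    Submodule.ideal_span_singleton_smul, Submodule.ideal_span_singleton_smul]
  refine ⟨koszulHomologyEquivColon (isSMulRegular_iff_right_eq_zero_of_smul.2 hx) y ?_ ?_ ?_⟩
  · rw [← Submodule.ideal_span_singleton_smul]
    exact Submodule.smul_mono_left ((Ideal.span_singleton_le_iff_mem _).2 (Ideal.pow_mem_pow hyI _))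
  · rw [← Submodule.ideal_span_singleton_smul, ← Submodule.mul_smul, pow_succ']
    exact Submodule.smul_mono_left (Ideal.mul_mono_left ((Ideal.span_singleton_le_iff_mem _).2 hyI))
  · rw [← Submodule.ideal_span_singleton_smul, ← Submodule.ideal_span_singleton_smul,
      ← Submodule.mul_smul, ← Submodule.sup_smul, ← Ideal.span_singleton_pow,
      show I = Ideal.span {x} ⊔ Ideal.span {y} from Ideal.span_insert x {y}]
    exact Submodule.smul_mono_left (Ideal.sup_pow_succ_le _ _ k)
end

section
/- Let A be a noetherian ring containing ℚ with finite integral degree d = d_A(Ā), let N ⊆ M be finitely generated A-modules, and let I be a regular ideal of A having a principal reduction (x) where x is a d-sequence with respect to M/N. Then for every n ≥ d, IⁿM ∩ N = I^{n-d}(I^d M ∩ N). -/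
/-!
Since `ℚ ⊆ A`, polarization (`n! a₁ ⋯ aₙ` is an alternating sum of `n`-th powers of partial sums)
shows that `I ^ d` is generated by the `d`-th powers of elements of `I`. The regular element of `I`
forces `x` to be a non-zero-divisor, and for `a ∈ I` the fraction `a / x` stabilizes the finitely
generated module `I ^ m`, which contains the unit `x ^ m` of the total quotient ring; so `a / x` is
integral and satisfies a monic equation of degree exactly `d`. Clearing denominators gives
`a ^ d ∈ x I ^ (d - 1)`, whence `I ^ d = x I ^ (d - 1)` and
`I ^ (d + k) M = x ^ (k + 1) I ^ (d - 1) M`. Finally, if `x ^ (k + 1) w ∈ N`, the d-sequence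
condition gives `x w ∈ N`.
-/

open Finset Polynomial Pointwise
open scoped Nat nonZeroDivisors

theorem factorial_smul_prod_eq_sum_powerset {R : Type*} [CommRing R] (n : ℕ) (f : Fin n → R) :
    n ! • ∏ i, f i =
      ∑ t ∈ (univ : Finset (Fin n)).powerset, (-1 : ℤ) ^ #t • (∑ i ∈ tᶜ, f i) ^ n := by
  classical
  let S : Fin n → Finset (Fin n → Fin n) := fun i ↦ Fintype.piFinset fun _ ↦ {i}ᶜ
  have hS : ∀ t : Finset (Fin n), t.inf S = Fintype.piFinset fun _ ↦ tᶜ := by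
    intro t; ext p; simp only [mem_inf, Fintype.mem_piFinset, mem_compl, mem_singleton, S]
    exact ⟨fun h a ha ↦ h _ ha a rfl, fun h i hi a hai ↦ h a (hai ▸ hi)⟩
  have hsurj : (univ.inf fun i ↦ (S i)ᶜ) = univ.filter Function.Surjective := by
    ext p; simp [S, Function.Surjective, mem_inf, Fintype.mem_piFinset]
  calc n ! • ∏ i, f i = ∑ σ : Equiv.Perm (Fin n), ∏ i, f (σ i) := by
        simp [Equiv.prod_comp, Fintype.card_perm]
    _ = ∑ p ∈ univ.filter Function.Surjective, ∏ i, f (p i) := by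
        refine sum_bij (fun σ _ ↦ ⇑σ) (fun σ _ ↦ by simpa using σ.surjective)
          (fun σ _ τ _ h ↦ Equiv.coe_fn_injective h) (fun p hp ↦ ?_) (fun _ _ ↦ rfl)
        have hp := Finite.surjective_iff_bijective.mp (mem_filter.mp hp).2
        exact ⟨Equiv.ofBijective p hp, mem_univ _, rfl⟩
    _ = ∑ t ∈ univ.powerset, (-1 : ℤ) ^ #t • ∑ p ∈ t.inf S, ∏ i, f (p i) := by
        rw [← hsurj, inclusion_exclusion_sum_inf_compl]
    _ = _ := by simp_rw [hS, sum_pow']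

theorem Ideal.span_pow_image_eq_pow {A : Type*} [CommRing A] [Algebra ℚ A] (I : Ideal A) (n : ℕ) :
    Ideal.span ((· ^ n) '' (I : Set A)) = I ^ n := by
  refine le_antisymm (Ideal.span_le.mpr ?_) ?_
  · rintro _ ⟨a, ha, rfl⟩
    exact Ideal.pow_mem_pow ha n
  rw [Submodule.pow_eq_span_pow_set, Submodule.span_le]
  intro y hy
  obtain ⟨f, rfl⟩ := Set.mem_pow.mp hy
  rw [List.prod_ofFn]
  have hsmul : n ! • ∏ i, (f i : A) ∈ Ideal.span ((· ^ n) '' (I : Set A)) := by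
    rw [factorial_smul_prod_eq_sum_powerset]
    exact Submodule.sum_mem _ fun t _ ↦ Submodule.smul_of_tower_mem _ _ <|
      Ideal.subset_span (Set.mem_image_of_mem _ (I.sum_mem fun i _ ↦ (f i).2))
  have hfact : (n ! : ℚ) ≠ 0 := by positivity
  rw [← Nat.cast_smul_eq_nsmul ℚ] at hsmul
  simpa [smul_smul, inv_mul_cancel₀ hfact] using Submodule.smul_of_tower_mem _ (n ! : ℚ)⁻¹ hsmul

theorem isIntegral_of_mul_mem_submodule {R S : Type*} [CommRing R] [IsNoetherianRing R]
    [CommRing S] [Algebra R S] {C : Submodule R S} (hC : C.FG) {c : S} (hc : IsUnit c)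
    (hcC : c ∈ C) {b : S} (hb : ∀ y ∈ C, b * y ∈ C) : IsIntegral R b := by
  have hstab : ∀ y ∈ Algebra.adjoin R {b}, ∀ w ∈ C, y * w ∈ C := by
    intro y hy
    induction hy using Algebra.adjoin_induction with
    | mem y hy => rw [Set.mem_singleton_iff.mp hy]; exact hb
    | algebraMap r => intro w hw; rw [← Algebra.smul_def]; exact C.smul_mem r hw
    | add y₁ y₂ _ _ h₁ h₂ => intro w hw; rw [add_mul]; exact C.add_mem (h₁ w hw) (h₂ w hw)
    | mul y₁ y₂ _ _ h₁ h₂ => intro w hw; rw [mul_assoc]; exact h₁ _ (h₂ w hw)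
  have hle : Subalgebra.toSubmodule (Algebra.adjoin R {b}) ≤
      C.map (LinearMap.mulLeft R (↑hc.unit⁻¹ : S)) :=
    fun y hy ↦ ⟨y * c, hstab y hy c hcC, by simp [mul_left_comm]⟩
  exact .of_mem_of_fg _ ((hC.map _).of_le hle) b (Algebra.self_mem_adjoin_singleton R b)

theorem isIntegral_mk'_of_pow_succ_eq {A K : Type*} [CommRing A] [IsNoetherianRing A] [CommRing K]
    [Algebra A K] [IsFractionRing A K] {I : Ideal A} {x : A} (hx : x ∈ A⁰) (hxI : x ∈ I) {m : ℕ}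
    (hred : I ^ (m + 1) = Ideal.span {x} * I ^ m) {a : A} (ha : a ∈ I) :
    IsIntegral A (IsLocalization.mk' K a ⟨x, hx⟩) := by
  refine isIntegral_of_mul_mem_submodule
    (Submodule.FG.map (Algebra.linearMap A K) (IsNoetherian.noetherian (I ^ m)))
    (IsLocalization.map_units K (⟨x ^ m, pow_mem hx m⟩ : A⁰))
    (Submodule.mem_map_of_mem (Ideal.pow_mem_pow hxI m)) ?_
  rintro _ ⟨t, ht, rfl⟩
  obtain ⟨u, hu, hxu⟩ : ∃ u ∈ I ^ m, x * u = a * t := Ideal.mem_span_singleton_mul.mp <| by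
    rw [← hred, pow_succ']; exact Ideal.mul_mem_mul ha ht
  refine ⟨u, hu, ?_⟩
  simp only [Algebra.linearMap_apply]
  rw [mul_comm, IsLocalization.mul_mk'_eq_mk'_of_mul, eq_comm, IsLocalization.mk'_eq_iff_eq_mul,
    ← map_mul, mul_comm t, ← hxu, mul_comm]

theorem Ideal.pow_natDegree_mem_of_eval_scaleRoots_eq_zero {A : Type*} [CommRing A] {I : Ideal A}
    {x a : A} (hxI : x ∈ I) (ha : a ∈ I) {p : A[X]} (hp : p.Monic)
    (hroot : (p.scaleRoots x).eval a = 0) :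
    a ^ p.natDegree ∈ Ideal.span {x} * I ^ (p.natDegree - 1) := by
  rw [eval_eq_sum_range, natDegree_scaleRoots, sum_range_succ, coeff_scaleRoots_natDegree,
    hp.leadingCoeff, one_mul, add_eq_zero_iff_eq_neg'] at hroot
  rw [hroot]
  refine neg_mem (Submodule.sum_mem _ fun i hi ↦ ?_)
  have hi : i + 1 ≤ p.natDegree := mem_range.mp hi
  rw [coeff_scaleRoots, show p.natDegree - i = p.natDegree - 1 - i + 1 by omega, pow_succ,
    show p.coeff i * (x ^ (p.natDegree - 1 - i) * x) * a ^ i =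
      x * (p.coeff i * (x ^ (p.natDegree - 1 - i) * a ^ i)) by ring]
  refine Ideal.mul_mem_mul (Ideal.mem_span_singleton_self x) (Ideal.mul_mem_left _ _ ?_)
  have h := Ideal.mul_mem_mul (Ideal.pow_mem_pow hxI (p.natDegree - 1 - i)) (Ideal.pow_mem_pow ha i)
  rwa [← pow_add, Nat.sub_add_cancel (by omega)] at h

theorem Polynomial.exists_monic_natDegree_eq_of_le {R S : Type*} [CommRing R] [Nontrivial R]
    [Ring S] [Algebra R S] {b : S} {p : R[X]} (hp : p.Monic) (hroot : aeval b p = 0) {d : ℕ} (hd : p.natDegree ≤ d) :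
    ∃ q : R[X], q.Monic ∧ q.natDegree = d ∧ aeval b q = 0 := by
  refine ⟨p * X ^ (d - p.natDegree), hp.mul (monic_X_pow _), ?_, by simp [hroot]⟩
  rw [natDegree_mul_X_pow _ hp.ne_zero]
  omega

theorem mem_nonZeroDivisors_of_le_span_singleton {A : Type*} [CommRing A] {I : Ideal A} {x : A}
    {n : ℕ} (hle : I ^ n ≤ Ideal.span {x}) {z : A} (hz : z ∈ A⁰) (hzI : z ∈ I) : x ∈ A⁰ := by
  obtain ⟨t, ht⟩ := Ideal.mem_span_singleton'.mp (hle (Ideal.pow_mem_pow hzI n))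
  exact (mul_mem_nonZeroDivisors.mp (ht ▸ pow_mem hz n)).2

theorem Ideal.pow_eq_span_singleton_mul_pow_pred {A K : Type*} [CommRing A] [IsNoetherianRing A]
    [Algebra ℚ A] [CommRing K] [Algebra A K] [IsFractionRing A K] {d : ℕ} (hd1 : 1 ≤ d)
    (hd : ∀ b : K, IsIntegral A b → ∃ p : A[X], p.Monic ∧ p.natDegree ≤ d ∧ aeval b p = 0)
    {I : Ideal A} {x : A} (hx : x ∈ A⁰) (hxI : x ∈ I) {m : ℕ}
    (hred : I ^ (m + 1) = Ideal.span {x} * I ^ m) :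
    I ^ d = Ideal.span {x} * I ^ (d - 1) := by
  nontriviality A
  refine le_antisymm ?_ ?_
  · rw [← Ideal.span_pow_image_eq_pow, Ideal.span_le]
    rintro _ ⟨a, ha, rfl⟩
    obtain ⟨p, hp, hpd, hroot⟩ := hd _ (isIntegral_mk'_of_pow_succ_eq (K := K) hx hxI hred ha)
    obtain ⟨q, hq, rfl, hqroot⟩ := exists_monic_natDegree_eq_of_le hp hroot hpd
    refine Ideal.pow_natDegree_mem_of_eval_scaleRoots_eq_zero hxI ha hq ?_
    apply IsFractionRing.injective A K
    rw [← aeval_algebraMap_apply_eq_algebraMap_eval, map_zero]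
    exact scaleRoots_aeval_eq_zero_of_aeval_mk'_eq_zero hqroot
  · calc Ideal.span {x} * I ^ (d - 1) ≤ I * I ^ (d - 1) :=
          Ideal.mul_mono_left ((Ideal.span_singleton_le_iff_mem I).mpr hxI)
      _ = I ^ d := by rw [← pow_succ', Nat.sub_add_cancel hd1]

theorem pow_mul_eq_pow_mul_of_mul_eq {M : Type*} [CommMonoid M] {a b c : M} (h : a * c = b * c)
    (k : ℕ) : a ^ k * c = b ^ k * c := by
  induction k with
  | zero => simp
  | succ k ih => rw [pow_succ', mul_assoc, ih, mul_left_comm, h, ← mul_assoc, ← pow_succ]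

theorem smul_eq_zero_of_pow_succ_smul_eq_zero {R P : Type*} [Monoid R] [Zero P] [MulAction R P]
    {x : R} (hx : ∀ p : P, x • x • p = 0 → x • p = 0) (k : ℕ) {p : P}
    (hp : x ^ (k + 1) • p = 0) : x • p = 0 := by
  induction k generalizing p with
  | zero => simpa using hp
  | succ k ih => exact hx p (ih (by rwa [smul_smul, ← pow_succ]))

theorem Submodule.pow_succ_smul_inf_eq {A M : Type*} [CommRing A] [AddCommGroup M] [Module A M]
    {x : A} (N L : Submodule A M) (hx : ∀ p : M ⧸ N, x • x • p = 0 → x • p = 0) (k : ℕ) :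
    x ^ (k + 1) • L ⊓ N = x ^ k • (x • L ⊓ N) := by
  ext u
  simp only [mem_inf, mem_smul_pointwise_iff_exists]
  constructor
  · rintro ⟨⟨w, hw, rfl⟩, hu⟩
    have hxw : x • w ∈ N := by
      rw [← Quotient.mk_eq_zero, Quotient.mk_smul]
      refine smul_eq_zero_of_pow_succ_smul_eq_zero hx k ?_
      rwa [← Quotient.mk_smul, Quotient.mk_eq_zero]
    exact ⟨x • w, ⟨⟨w, hw, rfl⟩, hxw⟩, by rw [smul_smul, ← pow_succ]⟩
  · rintro ⟨_, ⟨⟨w, hw, rfl⟩, hxw⟩, rfl⟩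
    exact ⟨⟨w, hw, by rw [smul_smul, ← pow_succ]⟩, N.smul_mem _ hxw⟩

theorem Submodule.pow_add_smul_top_inf_eq {A M : Type*} [CommRing A] [AddCommGroup M] [Module A M]
    (N : Submodule A M) {I : Ideal A} {x : A} (hxI : x ∈ I) {d : ℕ} (hd1 : 1 ≤ d)
    (hId : I ^ d = Ideal.span {x} * I ^ (d - 1))
    (hx : ∀ p : M ⧸ N, x • x • p = 0 → x • p = 0) (k : ℕ) :
    (I ^ (d + k) • ⊤ : Submodule A M) ⊓ N = I ^ k • ((I ^ d • ⊤ : Submodule A M) ⊓ N) := by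
  set L : Submodule A M := I ^ (d - 1) • ⊤
  have hpow : ∀ j, (I ^ (d + j) • ⊤ : Submodule A M) = x ^ (j + 1) • L := by
    intro j
    have h : I * I ^ (d - 1) = Ideal.span {x} * I ^ (d - 1) := by
      rw [← hId, ← pow_succ', Nat.sub_add_cancel hd1]
    rw [show d + j = j + 1 + (d - 1) by omega, pow_add, pow_mul_eq_pow_mul_of_mul_eq h,
      Ideal.span_singleton_pow, Submodule.mul_smul, Submodule.ideal_span_singleton_smul]
  refine le_antisymm ?_ ?_
  · have hId_smul : (I ^ d • ⊤ : Submodule A M) = x • L := by simpa using hpow 0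
    rw [hpow, pow_succ_smul_inf_eq N L hx, hId_smul, ← Submodule.ideal_span_singleton_smul]
    exact smul_mono_left ((Ideal.span_singleton_le_iff_mem _).mpr (Ideal.pow_mem_pow hxI k))
  · refine le_inf ?_ (smul_le_right.trans inf_le_right)
    calc I ^ k • ((I ^ d • ⊤ : Submodule A M) ⊓ N) ≤ I ^ k • I ^ d • ⊤ :=
          smul_mono_right _ inf_le_left
      _ = I ^ (d + k) • ⊤ := by rw [← Submodule.mul_smul, ← pow_add, add_comm]

theorem stmt18_general {A : Type*} [CommRing A] [IsNoetherianRing A] [Algebra ℚ A]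
    {M : Type*} [AddCommGroup M] [Module A M]
    (d : ℕ) (hd1 : 1 ≤ d)
    (hd : ∀ b : FractionRing A, IsIntegral A b →
      ∃ p : Polynomial A, p.Monic ∧ p.natDegree ≤ d ∧ Polynomial.aeval b p = 0)
    (N : Submodule A M) (I : Ideal A) (hIreg : ∃ z ∈ I, z ∈ nonZeroDivisors A)
    (x : A) (hxI : x ∈ I) (hred : ∃ m : ℕ, I ^ (m + 1) = Ideal.span {x} * I ^ m)
    (hds : ∀ p : M ⧸ N, x • x • p = 0 → x • p = 0) :
    ∀ n, d ≤ n →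
      (I ^ n • ⊤ : Submodule A M) ⊓ N = I ^ (n - d) • ((I ^ d • ⊤ : Submodule A M) ⊓ N) := by
  intro n hn
  obtain ⟨m, hm⟩ := hred
  obtain ⟨z, hzI, hz⟩ := hIreg
  have hx : x ∈ A⁰ :=
    mem_nonZeroDivisors_of_le_span_singleton (hm.trans_le Ideal.mul_le_left) hz hzI
  have hId := Ideal.pow_eq_span_singleton_mul_pow_pred hd1 hd hx hxI hm
  obtain ⟨k, rfl⟩ := Nat.exists_eq_add_of_le hn
  rw [Nat.add_sub_cancel_left]
  exact N.pow_add_smul_top_inf_eq hxI hd1 hId hds k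

/-- Let `A` be a noetherian ring containing ℚ with finite integral degree
`d = d_A(Ā)`, `N ⊆ M` finitely generated `A`-modules, and `I` a regular ideal having a
principal reduction `(x)` where `x` is a d-sequence with respect to `M/N` (i.e.
`(0 : x²) = (0 : x)` on `M/N`). Then for every `n ≥ d`, `IⁿM ∩ N = I^{n-d}(I^d M ∩ N)`. -/
theorem stmt18 {A : Type*} [CommRing A] [IsNoetherianRing A] [Algebra ℚ A]
    {M : Type*} [AddCommGroup M] [Module A M] [Module.Finite A M]
    (d : ℕ) (hd1 : 1 ≤ d)
    (hd : ∀ b : FractionRing A, IsIntegral A b →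
      ∃ p : Polynomial A, p.Monic ∧ p.natDegree ≤ d ∧ Polynomial.aeval b p = 0)
    (N : Submodule A M) (I : Ideal A) (hIreg : ∃ z ∈ I, z ∈ nonZeroDivisors A)
    (x : A) (hxI : x ∈ I) (hred : ∃ m : ℕ, I ^ (m + 1) = Ideal.span {x} * I ^ m)
    (hds : ∀ p : M ⧸ N, x • x • p = 0 → x • p = 0) :
    ∀ n, d ≤ n →
      (I ^ n • ⊤ : Submodule A M) ⊓ N = I ^ (n - d) • ((I ^ d • ⊤ : Submodule A M) ⊓ N) :=
  stmt18_general d hd1 hd N I hIreg x hxI hred hds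
end
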